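/- arXiv:1202.4920 — 3 statements merged into one kernel-verified Lean document; each statement's English description precedes it below -/
import Mathlib

section
/- Let χ : ℝ → ℝ be a C¹ function with χ(ρ) = 0 for ρ ≤ 1 and χ(ρ) = 1 for ρ ≥ 2 and 0 ≤ χ ≤ 1. Then the double integral I(χ) := ∫₀^∞ ∫₀^∞ (χ(ρ) − χ(ρ'))/((ρ − ρ')·√(ρρ')) dρ dρ' is finite and equals ∫₀^∞ (ln z)/((z − 1)·√z) dz; in particular I(χ) is independent of the choice of χ. -/
open MeasureTheory Set

namespace Stmt0Aux

/-- Frullani-type integral for the cutoff. -/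
lemma frullani {χ : ℝ → ℝ} (hχ : Continuous χ)
    (h0 : ∀ ρ : ℝ, ρ ≤ 1 → χ ρ = 0) (h1 : ∀ ρ : ℝ, 2 ≤ ρ → χ ρ = 1)
    {z : ℝ} (hz : 0 < z) :
    ∫ ρ in Ioi (0:ℝ), (χ ρ - χ (z * ρ)) / ρ = - Real.log z := by
  set a : ℝ := min 1 z⁻¹ with ha
  set b : ℝ := max 2 (2 * z⁻¹) with hb
  have hzinv : 0 < z⁻¹ := inv_pos.2 hz
  have ha0 : 0 < a := lt_min one_pos hzinv
  have ha1 : a ≤ 1 := min_le_left _ _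
  have hza : z * a ≤ 1 := by
    calc z * a ≤ z * z⁻¹ := by
          exact mul_le_mul_of_nonneg_left (min_le_right _ _) hz.le
      _ = 1 := mul_inv_cancel₀ hz.ne'
  have hza0 : 0 < z * a := mul_pos hz ha0
  have hb2 : 2 ≤ b := le_max_left _ _
  have hb0 : 0 < b := lt_of_lt_of_le two_pos hb2
  have hzb : 2 ≤ z * b := by
    calc (2:ℝ) = z * (2 * z⁻¹) := by field_simp
      _ ≤ z * b := mul_le_mul_of_nonneg_left (le_max_right _ _) hz.le
  have hab : a ≤ b := ha1.trans (by linarith)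
  have hg : ∀ p q : ℝ, 0 < p → 0 < q →
      IntervalIntegrable (fun u => χ u / u) volume p q := by
    intro p q hp hq
    apply ContinuousOn.intervalIntegrable
    apply hχ.continuousOn.div continuousOn_id
    intro x hx
    rcases Set.mem_uIcc.mp hx with ⟨h, _⟩ | ⟨h, _⟩
    · exact (lt_of_lt_of_le hp h).ne'
    · exact (lt_of_lt_of_le hq h).ne'
  have key : ∫ ρ in Ioi (0:ℝ), (χ ρ - χ (z * ρ)) / ρ
      = ∫ ρ in a..b, (χ ρ - χ (z * ρ)) / ρ := by
    rw [intervalIntegral.integral_of_le hab]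
    apply setIntegral_eq_of_subset_of_ae_diff_eq_zero
      measurableSet_Ioi.nullMeasurableSet
      (fun x hx => ha0.trans hx.1)
    apply ae_of_all
    intro x hx
    obtain ⟨hx0, hx1⟩ := hx
    simp only [mem_Ioc, not_and_or, not_lt, not_le] at hx1
    rcases hx1 with hxa | hxb
    · have hzx : z * x ≤ 1 := le_trans (mul_le_mul_of_nonneg_left hxa hz.le) hza
      rw [h0 x (hxa.trans ha1), h0 _ hzx, sub_zero, zero_div]
    · have h2x : (2:ℝ) ≤ x := le_trans hb2 hxb.le
      have hzx : (2:ℝ) ≤ z * x :=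
        le_trans hzb (mul_le_mul_of_nonneg_left hxb.le hz.le)
      rw [h1 x h2x, h1 _ hzx, sub_self, zero_div]
  have hI1 : IntervalIntegrable (fun ρ => χ ρ / ρ) volume a b := hg a b ha0 hb0
  have hI2 : IntervalIntegrable (fun ρ => χ (z * ρ) / ρ) volume a b := by
    apply ContinuousOn.intervalIntegrable
    apply ((hχ.comp (continuous_const.mul continuous_id)).continuousOn).div continuousOn_id
    intro x hx
    rcases Set.mem_uIcc.mp hx with ⟨h, _⟩ | ⟨h, _⟩
    · exact (lt_of_lt_of_le ha0 h).ne'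
    · exact (lt_of_lt_of_le hb0 h).ne'
  have e1 : ∫ ρ in a..b, (χ ρ - χ (z * ρ)) / ρ
      = (∫ ρ in a..b, χ ρ / ρ) - ∫ ρ in a..b, χ (z * ρ) / ρ := by
    rw [← intervalIntegral.integral_sub hI1 hI2]
    apply intervalIntegral.integral_congr
    intro x _
    simp [sub_div]
  have e2 : ∫ ρ in a..b, χ (z * ρ) / ρ = ∫ u in (z*a)..(z*b), χ u / u := by
    have hEq : EqOn (fun ρ => χ (z * ρ) / ρ) (fun ρ => z • (χ (z * ρ) / (z * ρ))) (uIcc a b) := by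
      intro x hx
      have hx0 : 0 < x := by
        rcases Set.mem_uIcc.mp hx with ⟨h, _⟩ | ⟨h, _⟩
        · exact lt_of_lt_of_le ha0 h
        · exact lt_of_lt_of_le hb0 h
      simp only [smul_eq_mul]
      field_simp
    rw [intervalIntegral.integral_congr hEq, intervalIntegral.integral_smul,
      intervalIntegral.integral_comp_mul_left (fun u => χ u / u) hz.ne',
      smul_smul, mul_inv_cancel₀ hz.ne', one_smul]
  have e3 : ∫ u in a..(z*a), χ u / u = 0 := by
    have hEq : EqOn (fun u => χ u / u) (fun _ => (0:ℝ)) (uIcc a (z*a)) := by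
      intro u hu
      have hu1 : u ≤ 1 := by
        rcases Set.mem_uIcc.mp hu with ⟨_, h⟩ | ⟨_, h⟩
        · exact h.trans hza
        · exact h.trans ha1
      simp [h0 u hu1]
    rw [intervalIntegral.integral_congr hEq, intervalIntegral.integral_zero]
  have e4 : ∫ u in b..(z*b), χ u / u = Real.log z := by
    have hEq : EqOn (fun u => χ u / u) (fun u => u⁻¹) (uIcc b (z*b)) := by
      intro u hu
      have hu2 : (2:ℝ) ≤ u := by
        rcases Set.mem_uIcc.mp hu with ⟨h, _⟩ | ⟨h, _⟩
        · exact hb2.trans h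
        · exact hzb.trans h
      simp [h1 u hu2]
    rw [intervalIntegral.integral_congr hEq, integral_inv, mul_div_assoc]
    · rw [div_self hb0.ne', mul_one]
    · intro h
      rcases Set.mem_uIcc.mp h with ⟨h', _⟩ | ⟨h', _⟩
      · exact absurd h' (by linarith)
      · exact absurd h' (by linarith)
  have a1 : (∫ u in a..(z*a), χ u / u) + ∫ u in (z*a)..b, χ u / u = ∫ u in a..b, χ u / u :=
    intervalIntegral.integral_add_adjacent_intervals (hg _ _ ha0 hza0) (hg _ _ hza0 hb0)
  have a2 : (∫ u in (z*a)..b, χ u / u) + ∫ u in b..(z*b), χ u / u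
      = ∫ u in (z*a)..(z*b), χ u / u :=
    intervalIntegral.integral_add_adjacent_intervals (hg _ _ hza0 hb0) (hg _ _ hb0 (mul_pos hz hb0))
  rw [key, e1, e2, ← a1, ← a2, e3, e4]
  ring

end Stmt0Aux

/-- The double integral `∫₀^∞∫₀^∞ (χ(ρ)−χ(ρ'))/((ρ−ρ')√(ρρ'))` is finite and
equals `∫₀^∞ ln z/((z−1)√z) dz`, independently of the cutoff `χ`. -/
theorem stmt0 (χ : ℝ → ℝ) (hχ : ContDiff ℝ 1 χ)
    (h0 : ∀ ρ : ℝ, ρ ≤ 1 → χ ρ = 0) (h1 : ∀ ρ : ℝ, 2 ≤ ρ → χ ρ = 1)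
    (hb : ∀ ρ : ℝ, 0 ≤ χ ρ ∧ χ ρ ≤ 1) :
    IntegrableOn
      (fun q : ℝ × ℝ => (χ q.1 - χ q.2) / ((q.1 - q.2) * Real.sqrt (q.1 * q.2)))
      (Ioi 0 ×ˢ Ioi 0) volume ∧
    (∫ q in (Ioi (0:ℝ) ×ˢ Ioi (0:ℝ)),
        (χ q.1 - χ q.2) / ((q.1 - q.2) * Real.sqrt (q.1 * q.2)))
      = ∫ z in Ioi (0:ℝ), Real.log z / ((z - 1) * Real.sqrt z) := by
  set f : ℝ × ℝ → ℝ :=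
    fun q => (χ q.1 - χ q.2) / ((q.1 - q.2) * Real.sqrt (q.1 * q.2)) with hf
  have hχc : Continuous χ := hχ.continuous
  -- Lipschitz constant
  obtain ⟨C, hC0, hlip⟩ : ∃ C : ℝ, 0 ≤ C ∧ ∀ p q : ℝ, |χ p - χ q| ≤ C * |p - q| := by
    have hdiff : Differentiable ℝ χ := hχ.differentiable one_ne_zero
    have hdc : Continuous (deriv χ) := hχ.continuous_deriv le_rfl
    obtain ⟨C, hC⟩ := (isCompact_Icc (a := (1:ℝ)) (b := 2)).exists_bound_of_continuousOn
      hdc.continuousOn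
    have hzero : ∀ x : ℝ, x ∉ Icc (1:ℝ) 2 → deriv χ x = 0 := by
      intro x hx
      rw [mem_Icc, not_and_or, not_le, not_le] at hx
      rcases hx with hx | hx
      · have hev : χ =ᶠ[nhds x] fun _ => (0:ℝ) := by
          filter_upwards [Iio_mem_nhds hx] with y hy using h0 y (le_of_lt hy)
        rw [hev.deriv_eq]; exact deriv_const x 0
      · have hev : χ =ᶠ[nhds x] fun _ => (1:ℝ) := by
          filter_upwards [Ioi_mem_nhds hx] with y hy using h1 y (le_of_lt hy)
        rw [hev.deriv_eq]; exact deriv_const x 1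
    refine ⟨max C 0, le_max_right _ _, ?_⟩
    intro p q
    have hbd : ∀ x : ℝ, x ∈ (univ : Set ℝ) → ‖deriv χ x‖ ≤ max C 0 := by
      intro x _
      by_cases hx : x ∈ Icc (1:ℝ) 2
      · exact (hC x hx).trans (le_max_left _ _)
      · simp [hzero x hx]
    have := convex_univ.norm_image_sub_le_of_norm_deriv_le (f := χ)
      (fun x _ => hdiff x) hbd (mem_univ q) (mem_univ p)
    simpa [Real.norm_eq_abs] using this
  -- measurability
  have hfm : Measurable f :=
    (((hχc.comp continuous_fst).sub (hχc.comp continuous_snd)).measurable).div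
      (((continuous_fst.sub continuous_snd).mul
        ((continuous_fst.mul continuous_snd).sqrt)).measurable)
  -- 1D integrable helpers
  have hsqrtI : ∀ c : ℝ, 0 < c → IntegrableOn (fun x : ℝ => 1 / Real.sqrt x) (Ioc 0 c) := by
    intro c hc
    have h := intervalIntegral.intervalIntegrable_rpow' (a := 0) (b := c)
      (r := -(1/2)) (by norm_num)
    rw [intervalIntegrable_iff_integrableOn_Ioc_of_le hc.le] at h
    apply h.congr_fun ?_ measurableSet_Ioc
    intro x hx
    show x ^ (-(1/2) : ℝ) = 1 / Real.sqrt x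
    rw [Real.rpow_neg hx.1.le, ← Real.sqrt_eq_rpow, one_div]
  have htail : IntegrableOn (fun x : ℝ => 3 / (x * Real.sqrt x)) (Ici 3) := by
    have h : IntegrableOn (fun x : ℝ => x ^ (-(3/2) : ℝ)) (Ioi 3) :=
      integrableOn_Ioi_rpow_of_lt (by norm_num) (by norm_num)
    rw [← integrableOn_Ici_iff_integrableOn_Ioi] at h
    have h3 : IntegrableOn (fun x : ℝ => 3 * x ^ (-(3/2) : ℝ)) (Ici 3) := h.const_mul 3
    apply h3.congr_fun ?_ measurableSet_Ici
    intro x hx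
    have hx0 : (0:ℝ) < x := lt_of_lt_of_le (by norm_num) hx
    have h32 : x ^ ((3:ℝ)/2) = x * Real.sqrt x := by
      rw [show (3:ℝ)/2 = 1 + 1/2 by norm_num, Real.rpow_add hx0, Real.rpow_one,
        ← Real.sqrt_eq_rpow]
    show 3 * x ^ (-(3/2) : ℝ) = 3 / (x * Real.sqrt x)
    rw [Real.rpow_neg hx0.le, h32, ← div_eq_mul_inv]
  have hres2 : ∀ (s t : Set ℝ), (volume : Measure (ℝ × ℝ)).restrict (s ×ˢ t)
      = (volume.restrict s).prod (volume.restrict t) := by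
    intro s t
    rw [Measure.volume_eq_prod, ← Measure.prod_restrict]
  have hnum1 : ∀ p q : ℝ, |χ p - χ q| ≤ 1 := by
    intro p q
    obtain ⟨hp1, hp2⟩ := hb p
    obtain ⟨hq1, hq2⟩ := hb q
    rw [abs_le]
    constructor <;> linarith
  -- integrability on pieces
  have hP3 : IntegrableOn f (Ioc 0 3 ×ˢ Ioc 0 3) volume := by
    have hbound : Integrable (fun q : ℝ × ℝ => (C * (1 / Real.sqrt q.1)) * (1 / Real.sqrt q.2))
        ((volume.restrict (Ioc 0 3)).prod (volume.restrict (Ioc 0 3))) :=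
      ((hsqrtI 3 (by norm_num)).const_mul C).mul_prod (hsqrtI 3 (by norm_num))
    rw [IntegrableOn, hres2]
    apply Integrable.mono' hbound hfm.aestronglyMeasurable
    rw [← hres2, ae_restrict_iff' (measurableSet_Ioc.prod measurableSet_Ioc)]
    apply ae_of_all
    rintro ⟨x, y⟩ ⟨hx, hy⟩
    have hx0 : 0 < x := hx.1
    have hy0 : 0 < y := hy.1
    have hsx : 0 < Real.sqrt x := Real.sqrt_pos.2 hx0
    have hsy : 0 < Real.sqrt y := Real.sqrt_pos.2 hy0
    simp only [hf, Real.norm_eq_abs]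
    by_cases hxy : x = y
    · rw [hxy, sub_self, zero_div, abs_zero]
      positivity
    · have hd : 0 < |x - y| := abs_pos.2 (sub_ne_zero_of_ne hxy)
      have hps : 0 < Real.sqrt (x * y) := Real.sqrt_pos.2 (mul_pos hx0 hy0)
      rw [abs_div, abs_mul, abs_of_nonneg (Real.sqrt_nonneg _)]
      calc |χ x - χ y| / (|x - y| * Real.sqrt (x * y))
          ≤ (C * |x - y|) / (|x - y| * Real.sqrt (x * y)) := by
            exact div_le_div₀ (by positivity) (hlip x y) (mul_pos hd hps) le_rfl
        _ = C * (1 / Real.sqrt x) * (1 / Real.sqrt y) := by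
            rw [mul_comm C |x - y|, mul_div_mul_left _ _ hd.ne', Real.sqrt_mul hx0.le]
            field_simp
  have hP4 : IntegrableOn f (Ioc 0 2 ×ˢ Ici 3) volume := by
    have hbound : Integrable (fun q : ℝ × ℝ => (1 / Real.sqrt q.1) * (3 / (q.2 * Real.sqrt q.2)))
        ((volume.restrict (Ioc 0 2)).prod (volume.restrict (Ici 3))) :=
      (hsqrtI 2 two_pos).mul_prod htail
    rw [IntegrableOn, hres2]
    apply Integrable.mono' hbound hfm.aestronglyMeasurable
    rw [← hres2, ae_restrict_iff' (measurableSet_Ioc.prod measurableSet_Ici)]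
    apply ae_of_all
    rintro ⟨x, y⟩ ⟨hx, hy⟩
    have hx0 : 0 < x := hx.1
    have hx2 : x ≤ 2 := hx.2
    have hy3 : (3:ℝ) ≤ y := hy
    have hy0 : 0 < y := lt_of_lt_of_le (by norm_num) hy3
    have hsx : 0 < Real.sqrt x := Real.sqrt_pos.2 hx0
    have hsy : 0 < Real.sqrt y := Real.sqrt_pos.2 hy0
    simp only [hf, Real.norm_eq_abs]
    rw [abs_div, abs_mul, abs_of_nonneg (Real.sqrt_nonneg _), Real.sqrt_mul hx0.le]
    have hxy : |x - y| = y - x := by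
      rw [abs_sub_comm, abs_of_nonneg (by linarith)]
    rw [hxy]
    calc |χ x - χ y| / ((y - x) * (Real.sqrt x * Real.sqrt y))
        ≤ 1 / ((y / 3) * (Real.sqrt x * Real.sqrt y)) := by
          apply div_le_div₀ zero_le_one (hnum1 x y) (by positivity)
          apply mul_le_mul_of_nonneg_right (by linarith) (by positivity)
      _ = (1 / Real.sqrt x) * (3 / (y * Real.sqrt y)) := by
          field_simp
  have hP5 : IntegrableOn f (Ici 3 ×ˢ Ioc 0 2) volume := by
    have hbound : Integrable (fun q : ℝ × ℝ => (3 / (q.1 * Real.sqrt q.1)) * (1 / Real.sqrt q.2))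
        ((volume.restrict (Ici 3)).prod (volume.restrict (Ioc 0 2))) :=
      htail.mul_prod (hsqrtI 2 two_pos)
    rw [IntegrableOn, hres2]
    apply Integrable.mono' hbound hfm.aestronglyMeasurable
    rw [← hres2, ae_restrict_iff' (measurableSet_Ici.prod measurableSet_Ioc)]
    apply ae_of_all
    rintro ⟨x, y⟩ ⟨hx, hy⟩
    have hy0 : 0 < y := hy.1
    have hy2 : y ≤ 2 := hy.2
    have hx3 : (3:ℝ) ≤ x := hx
    have hx0 : 0 < x := lt_of_lt_of_le (by norm_num) hx3
    have hsx : 0 < Real.sqrt x := Real.sqrt_pos.2 hx0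
    have hsy : 0 < Real.sqrt y := Real.sqrt_pos.2 hy0
    simp only [hf, Real.norm_eq_abs]
    rw [abs_div, abs_mul, abs_of_nonneg (Real.sqrt_nonneg _), Real.sqrt_mul hx0.le]
    have hxy : |x - y| = x - y := abs_of_nonneg (by linarith)
    rw [hxy]
    calc |χ x - χ y| / ((x - y) * (Real.sqrt x * Real.sqrt y))
        ≤ 1 / ((x / 3) * (Real.sqrt x * Real.sqrt y)) := by
          apply div_le_div₀ zero_le_one (hnum1 x y) (by positivity)
          apply mul_le_mul_of_nonneg_right (by linarith) (by positivity)
      _ = (3 / (x * Real.sqrt x)) * (1 / Real.sqrt y) := by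
          field_simp
  have hP6 : IntegrableOn f (Ici 2 ×ˢ Ici 2) volume := by
    apply (integrableOn_zero).congr_fun ?_ (measurableSet_Ici.prod measurableSet_Ici)
    rintro ⟨x, y⟩ ⟨hx, hy⟩
    simp [hf, h1 x hx, h1 y hy]
  have hcover : Ioi (0:ℝ) ×ˢ Ioi (0:ℝ) ⊆
      (Ioc 0 3 ×ˢ Ioc 0 3) ∪ ((Ioc 0 2 ×ˢ Ici 3) ∪ ((Ici 3 ×ˢ Ioc 0 2) ∪ (Ici 2 ×ˢ Ici 2))) := by
    rintro ⟨x, y⟩ ⟨hx, hy⟩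
    simp only [mem_union, mem_prod, mem_Ioc, mem_Ici, mem_Ioi] at *
    rcases le_or_gt x 3 with h3 | h3 <;> rcases le_or_gt y 3 with h4 | h4
    · exact Or.inl ⟨⟨hx, h3⟩, ⟨hy, h4⟩⟩
    · rcases le_or_gt x 2 with h5 | h5
      · exact Or.inr (Or.inl ⟨⟨hx, h5⟩, h4.le⟩)
      · exact Or.inr (Or.inr (Or.inr ⟨h5.le, by linarith⟩))
    · rcases le_or_gt y 2 with h5 | h5
      · exact Or.inr (Or.inr (Or.inl ⟨by linarith, ⟨hy, h5⟩⟩))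
      · exact Or.inr (Or.inr (Or.inr ⟨by linarith, h5.le⟩))
    · exact Or.inr (Or.inr (Or.inr ⟨by linarith, by linarith⟩))
  have hfint : IntegrableOn f (Ioi 0 ×ˢ Ioi 0) volume :=
    ((hP3.union (hP4.union (hP5.union hP6)))).mono_set hcover
  refine ⟨hfint, ?_⟩
  -- change of variables (ρ, z) ↦ (ρ, ρ z)
  set T : ℝ × ℝ → ℝ × ℝ := fun p => (p.1, p.1 * p.2) with hT
  set B : ℝ × ℝ → ℝ × ℝ →L[ℝ] ℝ × ℝ := fun p =>
    LinearMap.toContinuousLinearMap (Matrix.toLin (Module.Basis.finTwoProd ℝ) (Module.Basis.finTwoProd ℝ)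
      !![1, 0; p.2, p.1]) with hB
  have hTd : ∀ p : ℝ × ℝ, HasFDerivAt T (B p) p := by
    intro p
    simp only [hB]
    rw [Matrix.toLin_finTwoProd_toContinuousLinearMap]
    refine (HasFDerivAt.prodMk (hasFDerivAt_fst (𝕜 := ℝ) (p := p))
      ((hasFDerivAt_fst (𝕜 := ℝ) (p := p)).mul (hasFDerivAt_snd (𝕜 := ℝ) (p := p)))).congr_fderiv ?_
    ext <;> simp [add_comm]
  have hBdet : ∀ p : ℝ × ℝ, (B p).det = p.1 := by
    intro p
    simp [hB, LinearMap.det_toContinuousLinearMap, LinearMap.det_toLin, Matrix.det_fin_two_of]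
  have hsM : MeasurableSet (Ioi (0:ℝ) ×ˢ Ioi (0:ℝ)) := measurableSet_Ioi.prod measurableSet_Ioi
  have hinj : InjOn T (Ioi 0 ×ˢ Ioi 0) := by
    rintro ⟨a, b⟩ ⟨ha, _⟩ ⟨c, d⟩ ⟨hc, _⟩ h
    simp only [hT, Prod.mk.injEq] at h
    obtain ⟨h1', h2'⟩ := h
    subst h1'
    exact Prod.ext rfl (mul_left_cancel₀ (ne_of_gt ha) h2')
  have himg : T '' (Ioi 0 ×ˢ Ioi 0) = Ioi 0 ×ˢ Ioi 0 := by
    ext ⟨x, y⟩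
    constructor
    · rintro ⟨⟨ρ, z⟩, hmem, h⟩
      obtain ⟨hρ, hz⟩ := hmem
      simp only [hT, Prod.mk.injEq] at h
      obtain ⟨rfl, rfl⟩ := h
      exact ⟨hρ, show (0:ℝ) < ρ * z from mul_pos hρ hz⟩
    · rintro ⟨hx, hy⟩
      refine ⟨(x, y / x), ⟨hx, show (0:ℝ) < y / x from div_pos hy hx⟩, ?_⟩
      have hx0 : (0:ℝ) < x := hx
      have hxy : x * (y / x) = y := by
        rw [mul_comm]
        exact div_mul_cancel₀ y hx0.ne'
      simp [hT, hxy]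
  have hCoV := integral_image_eq_integral_abs_det_fderiv_smul volume hsM
    (fun p _ => (hTd p).hasFDerivWithinAt) hinj f
  have hIntG : IntegrableOn (fun p : ℝ × ℝ => |(B p).det| • f (T p)) (Ioi 0 ×ˢ Ioi 0) volume := by
    rw [← integrableOn_image_iff_integrableOn_abs_det_fderiv_smul volume hsM
      (fun p _ => (hTd p).hasFDerivWithinAt) hinj f, himg]
    exact hfint
  rw [himg] at hCoV
  rw [hCoV]
  have hIntG' : Integrable (fun p : ℝ × ℝ => |(B p).det| • f (T p))
      ((volume.restrict (Ioi 0)).prod (volume.restrict (Ioi 0))) := by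
    rw [← hres2]
    exact hIntG
  have hmeq : ∫ p in (Ioi (0:ℝ) ×ˢ Ioi (0:ℝ)), |(B p).det| • f (T p)
      = ∫ p, |(B p).det| • f (T p)
        ∂((volume.restrict (Ioi 0)).prod (volume.restrict (Ioi 0))) := by
    rw [← hres2]
  rw [hmeq, MeasureTheory.integral_prod_symm _ hIntG']
  have hae1 : ∀ᵐ z : ℝ, z ≠ 1 := by
    have hμ : (volume : Measure ℝ) {(1:ℝ)} = 0 := measure_singleton 1
    have h := measure_eq_zero_iff_ae_notMem.mp hμ
    simpa using h
  apply setIntegral_congr_ae measurableSet_Ioi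
  filter_upwards [hae1] with z hz1 hz0
  have hz : (0:ℝ) < z := hz0
  have hsz : 0 < Real.sqrt z := Real.sqrt_pos.2 hz
  have h1z : (1:ℝ) - z ≠ 0 := sub_ne_zero_of_ne (Ne.symm hz1)
  have hstep : ∀ ρ : ℝ, ρ ∈ Ioi (0:ℝ) →
      |(B (ρ, z)).det| • f (T (ρ, z))
        = ((1 - z) * Real.sqrt z)⁻¹ * ((χ ρ - χ (z * ρ)) / ρ) := by
    intro ρ hρ
    have hρ0 : (0:ℝ) < ρ := hρ
    rw [hBdet]
    simp only [hT, hf]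
    rw [abs_of_pos hρ0, smul_eq_mul]
    have hsq : Real.sqrt (ρ * (ρ * z)) = ρ * Real.sqrt z := by
      rw [show ρ * (ρ * z) = ρ ^ 2 * z by ring, Real.sqrt_mul (sq_nonneg ρ),
        Real.sqrt_sq hρ0.le]
    rw [hsq, mul_comm ρ z, show ρ - z * ρ = ρ * (1 - z) by ring]
    field_simp
  rw [setIntegral_congr_fun measurableSet_Ioi hstep, MeasureTheory.integral_const_mul,
    Stmt0Aux.frullani hχc h0 h1 hz]
  rw [show (1 - z) * Real.sqrt z = -((z - 1) * Real.sqrt z) by ring, inv_neg, neg_mul_neg,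
    inv_mul_eq_div]
end

section
/- Fix R > 0 and β > 1/2. Define, in the toroidal coordinates (ρ, θ, φ) around the circle of radius R, the function W_β = ρ^β cos(θ/2). Then there exists δ > 0 such that W_β is subharmonic (ΔW_β ≥ 0) on the region {0 < ρ < δ, −π < θ < π}; explicitly, ΔW_β = (1/(ρ(R−ρcos θ))) · ( (β² − 1/4)·ρ^{β−1}(R − ρcos θ) − β ρ^β cos θ − ρ^β sin²(θ/2) ) · cos(θ/2), which is ≥ 0 for ρ small enough since β² > 1/4. -/
open Real Filter


/-- Subharmonicity of `W_β = ρ^β cos(θ/2)` (expressed through the Laplacian in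
toroidal coordinates; `W_β` does not depend on `φ`) near the circle, for
`β > 1/2`, with the explicit value of `ΔW_β`. -/
theorem stmt15 (R β : ℝ) (hR : 0 < R) (hβ : 1/2 < β) :
    ∃ δ > (0:ℝ), ∀ ρ θ : ℝ, 0 < ρ → ρ < δ → -Real.pi < θ → θ < Real.pi →
      ((1 / (ρ * (R - ρ * Real.cos θ))) *
        ( deriv (fun a => a * (R - a * Real.cos θ)
              * deriv (fun b => b ^ β * Real.cos (θ/2)) a) ρ
        + deriv (fun a => ((R - ρ * Real.cos a) / ρ)
              * deriv (fun b => ρ ^ β * Real.cos (b/2)) a) θ )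
        = (1 / (ρ * (R - ρ * Real.cos θ))) *
            ((β^2 - 1/4) * ρ ^ (β - 1) * (R - ρ * Real.cos θ)
              - β * ρ ^ β * Real.cos θ
              - ρ ^ β * (Real.sin (θ/2))^2) * Real.cos (θ/2)) ∧
      0 ≤ (1 / (ρ * (R - ρ * Real.cos θ))) *
            ((β^2 - 1/4) * ρ ^ (β - 1) * (R - ρ * Real.cos θ)
              - β * ρ ^ β * Real.cos θ
              - ρ ^ β * (Real.sin (θ/2))^2) * Real.cos (θ/2) := by
  have hc0 : (0:ℝ) < β^2 - 1/4 := by nlinarith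
  set c0 := β^2 - 1/4 with hc0def
  clear_value c0
  have hden : (0:ℝ) < c0 + β + 1 := by nlinarith
  refine ⟨c0 * R / (c0 + β + 1), div_pos (mul_pos hc0 hR) hden, ?_⟩
  intro ρ θ hρ hρδ hθ1 hθ2
  have hρR : ρ < R := by
    have : c0 * R / (c0 + β + 1) < R := by
      rw [div_lt_iff₀ hden]; nlinarith
    linarith
  have hc1 : Real.cos θ ≤ 1 := Real.cos_le_one θ
  have hc1' : -1 ≤ Real.cos θ := Real.neg_one_le_cos θ
  have hRc : 0 < R - ρ * Real.cos θ := by nlinarith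
  have hpi : 0 < Real.pi := Real.pi_pos
  have hc2 : 0 ≤ Real.cos (θ/2) :=
    Real.cos_nonneg_of_mem_Icc ⟨by linarith, by linarith⟩
  have hA : (0:ℝ) < ρ ^ (β - 1) := Real.rpow_pos_of_pos hρ _
  have hrb : ρ ^ β = ρ ^ (β - 1) * ρ := by
    rw [← Real.rpow_add_one hρ.ne']; ring_nf
  -- first derivative
  have hd1 : deriv (fun a => a * (R - a * Real.cos θ)
        * deriv (fun b => b ^ β * Real.cos (θ/2)) a) ρ
      = β * Real.cos (θ/2) * (R * (β * ρ^(β-1)) - Real.cos θ * ((β+1) * ρ^β)) := by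
    have hev : (fun a => a * (R - a * Real.cos θ)
          * deriv (fun b => b ^ β * Real.cos (θ/2)) a)
        =ᶠ[nhds ρ] (fun a => β * Real.cos (θ/2)
          * (R * a^β - Real.cos θ * a^(β+1))) := by
      filter_upwards [eventually_gt_nhds hρ] with a ha
      have h1 : deriv (fun b : ℝ => b ^ β * Real.cos (θ/2)) a
          = β * a^(β-1) * Real.cos (θ/2) :=
        ((Real.hasDerivAt_rpow_const (Or.inl ha.ne')).mul_const _).deriv
      have hb : a ^ β = a^(β-1) * a := by
        rw [← Real.rpow_add_one ha.ne']; ring_nf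
      have hb1 : a ^ (β+1) = a^β * a := Real.rpow_add_one ha.ne' β
      rw [h1, hb1, hb]; ring
    rw [hev.deriv_eq]
    have h2 : HasDerivAt (fun a : ℝ => a ^ β) (β * ρ^(β-1)) ρ :=
      Real.hasDerivAt_rpow_const (Or.inl hρ.ne')
    have h3 : HasDerivAt (fun a : ℝ => a ^ (β+1)) ((β+1) * ρ^β) ρ := by
      have := Real.hasDerivAt_rpow_const (x := ρ) (p := β+1) (Or.inl hρ.ne')
      simpa using this
    exact (((h2.const_mul R).sub (h3.const_mul (Real.cos θ))).const_mul _).deriv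
  -- second derivative
  have hd2 : deriv (fun a => ((R - ρ * Real.cos a) / ρ)
        * deriv (fun b => ρ ^ β * Real.cos (b/2)) a) θ
      = (ρ * Real.sin θ / ρ) * (ρ^β * (-Real.sin (θ/2) * (1/2)))
        + ((R - ρ * Real.cos θ)/ρ) * (ρ^β * (-(Real.cos (θ/2) * (1/2)) * (1/2))) := by
    have hfun : (fun a => ((R - ρ * Real.cos a) / ρ)
          * deriv (fun b => ρ ^ β * Real.cos (b/2)) a)
        = fun a => ((R - ρ * Real.cos a) / ρ) * (ρ^β * (-Real.sin (a/2) * (1/2))) := by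
      funext a
      congr 1
      have hcd : HasDerivAt (fun b : ℝ => Real.cos (b/2)) (-Real.sin (a/2) * (1/2)) a := by
        have := (Real.hasDerivAt_cos (a/2)).comp a ((hasDerivAt_id a).div_const 2)
        simpa [Function.comp_def] using this
      exact ((hcd.const_mul _)).deriv
    rw [hfun]
    have hu : HasDerivAt (fun a : ℝ => (R - ρ * Real.cos a)/ρ) (ρ * Real.sin θ / ρ) θ := by
      have := (((Real.hasDerivAt_cos θ).const_mul ρ).const_sub R).div_const ρ
      simpa using this
    have hv : HasDerivAt (fun a : ℝ => ρ^β * (-Real.sin (a/2) * (1/2)))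
        (ρ^β * (-(Real.cos (θ/2) * (1/2)) * (1/2))) θ := by
      have hs : HasDerivAt (fun a : ℝ => Real.sin (a/2)) (Real.cos (θ/2) * (1/2)) θ := by
        simpa [Function.comp_def] using (Real.hasDerivAt_sin (θ/2)).comp θ ((hasDerivAt_id θ).div_const 2)
      exact (hs.neg.mul_const (1/2)).const_mul _
    exact (hu.mul hv).deriv
  have hs2 : Real.sin θ = 2 * Real.sin (θ/2) * Real.cos (θ/2) := by
    have h := Real.sin_two_mul (θ/2)
    rw [show 2*(θ/2) = θ by ring] at h
    exact h
  constructor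
  · rw [hd1, hd2, hs2, hrb, hc0def]
    field_simp
    ring
  · have hδ : ρ * (c0 + β + 1) < c0 * R := (lt_div_iff₀ hden).mp hρδ
    have hsq : (Real.sin (θ/2))^2 ≤ 1 := Real.sin_sq_le_one _
    have hE : 0 ≤ c0 * ρ ^ (β - 1) * (R - ρ * Real.cos θ)
        - β * ρ ^ β * Real.cos θ - ρ ^ β * (Real.sin (θ/2))^2 := by
      rw [hrb]
      have key : 0 ≤ c0*(R - ρ*Real.cos θ) - β*(ρ*Real.cos θ) - ρ*(Real.sin (θ/2))^2 := by
        nlinarith [mul_nonneg (mul_nonneg hc0.le hρ.le) (sub_nonneg.2 hc1),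
          mul_nonneg (mul_nonneg (show (0:ℝ) ≤ β by linarith) hρ.le) (sub_nonneg.2 hc1),
          mul_nonneg hρ.le (sub_nonneg.2 hsq)]
      nlinarith [mul_nonneg hA.le key]
    exact mul_nonneg (mul_nonneg (by positivity) hE) hc2
end

section
/- Fix R > 0 and β > 1/2, and define W_β = ρ^β cos(θ/2) cos φ in the toroidal coordinates (ρ, θ, φ) around the circle of radius R. Then for δ > 0 small enough, ΔW_β ≥ 0 on {0 < ρ < δ, −π < θ < π, −π/2 < φ < π/2}; explicitly ΔW_β = (1/(ρ(R−ρcosθ)))·[ ((β²−1/4)Rρ^{β−1} + O(ρ^β))cos(θ/2)cos φ − (ρ^{β+1}/(R−ρcosθ))cos(θ/2)cos φ ] ≥ 0. -/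
open Real
set_option maxHeartbeats 1000000

lemma derT1 (R β θ φ : ℝ) {ρ : ℝ} (hρ : 0 < ρ) :
    deriv (fun a => a * (R - a * Real.cos θ)
        * deriv (fun b => b ^ β * Real.cos (θ/2) * Real.cos φ) a) ρ
    = (1 * (R - ρ * Real.cos θ) + ρ * (0 - 1 * Real.cos θ))
        * (β * ρ ^ (β - 1) * Real.cos (θ/2) * Real.cos φ)
      + ρ * (R - ρ * Real.cos θ)
        * (β * ((β - 1) * ρ ^ (β - 1 - 1)) * Real.cos (θ/2) * Real.cos φ) := by
  have hEq : (fun a : ℝ => a * (R - a * Real.cos θ)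
        * deriv (fun b => b ^ β * Real.cos (θ/2) * Real.cos φ) a)
      =ᶠ[nhds ρ] (fun a : ℝ => a * (R - a * Real.cos θ)
        * (β * a ^ (β - 1) * Real.cos (θ/2) * Real.cos φ)) := by
    filter_upwards [isOpen_Ioi.mem_nhds hρ] with a (ha : 0 < a)
    have h : HasDerivAt (fun b : ℝ => b ^ β * Real.cos (θ/2) * Real.cos φ)
        (β * a ^ (β - 1) * Real.cos (θ/2) * Real.cos φ) a :=
      ((Real.hasDerivAt_rpow_const (Or.inl ha.ne')).mul_const (Real.cos (θ/2))).mul_const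
        (Real.cos φ)
    rw [h.deriv]
  rw [hEq.deriv_eq]
  have h1 : HasDerivAt (fun a : ℝ => a * (R - a * Real.cos θ))
      (1 * (R - ρ * Real.cos θ) + ρ * (0 - 1 * Real.cos θ)) ρ :=
    (hasDerivAt_id ρ).mul ((hasDerivAt_const ρ R).sub ((hasDerivAt_id ρ).mul_const (Real.cos θ)))
  have h2 : HasDerivAt (fun a : ℝ => β * a ^ (β - 1) * Real.cos (θ/2) * Real.cos φ)
      (β * ((β - 1) * ρ ^ (β - 1 - 1)) * Real.cos (θ/2) * Real.cos φ) ρ :=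
    (((Real.hasDerivAt_rpow_const (Or.inl hρ.ne')).const_mul β).mul_const
      (Real.cos (θ/2))).mul_const (Real.cos φ)
  exact (h1.mul h2).deriv

lemma derT2 (R β ρ φ : ℝ) (θ : ℝ) :
    deriv (fun a => ((R - ρ * Real.cos a) / ρ)
        * deriv (fun b => ρ ^ β * Real.cos (b/2) * Real.cos φ) a) θ
    = ((0 - ρ * -Real.sin θ) / ρ) * (ρ ^ β * (-Real.sin (θ/2) * (1/2)) * Real.cos φ)
      + ((R - ρ * Real.cos θ) / ρ)
        * (ρ ^ β * (-(Real.cos (θ/2) * (1/2)) * (1/2)) * Real.cos φ) := by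
  have hinner : ∀ a : ℝ, deriv (fun b => ρ ^ β * Real.cos (b/2) * Real.cos φ) a
      = ρ ^ β * (-Real.sin (a/2) * (1/2)) * Real.cos φ := by
    intro a
    have h : HasDerivAt (fun b : ℝ => ρ ^ β * Real.cos (b/2) * Real.cos φ)
        (ρ ^ β * (-Real.sin (a/2) * (1/2)) * Real.cos φ) a :=
      ((((hasDerivAt_id a).div_const 2).cos).const_mul (ρ ^ β)).mul_const (Real.cos φ)
    exact h.deriv
  have hfun : (fun a => ((R - ρ * Real.cos a) / ρ)
        * deriv (fun b => ρ ^ β * Real.cos (b/2) * Real.cos φ) a)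
      = fun a => ((R - ρ * Real.cos a) / ρ)
        * (ρ ^ β * (-Real.sin (a/2) * (1/2)) * Real.cos φ) := funext fun a => by rw [hinner a]
  rw [hfun]
  have g1 : HasDerivAt (fun a : ℝ => (R - ρ * Real.cos a) / ρ)
      ((0 - ρ * -Real.sin θ) / ρ) θ :=
    (((hasDerivAt_const θ R).sub ((Real.hasDerivAt_cos θ).const_mul ρ)).div_const ρ)
  have g2 : HasDerivAt (fun a : ℝ => ρ ^ β * (-Real.sin (a/2) * (1/2)) * Real.cos φ)
      (ρ ^ β * (-(Real.cos (θ/2) * (1/2)) * (1/2)) * Real.cos φ) θ :=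
    (((((hasDerivAt_id θ).div_const 2).sin.neg).mul_const (1/2)).const_mul (ρ ^ β)).mul_const
      (Real.cos φ)
  exact (g1.mul g2).deriv

lemma derT3 (R β ρ θ : ℝ) (φ : ℝ) :
    deriv (fun a => (ρ / (R - ρ * Real.cos θ))
        * deriv (fun b => ρ ^ β * Real.cos (θ/2) * Real.cos b) a) φ
    = (ρ / (R - ρ * Real.cos θ)) * (ρ ^ β * Real.cos (θ/2) * -Real.cos φ) := by
  have hinner : ∀ a : ℝ, deriv (fun b => ρ ^ β * Real.cos (θ/2) * Real.cos b) a
      = ρ ^ β * Real.cos (θ/2) * -Real.sin a := by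
    intro a
    exact ((Real.hasDerivAt_cos a).const_mul (ρ ^ β * Real.cos (θ/2))).deriv
  have hfun : (fun a => (ρ / (R - ρ * Real.cos θ))
        * deriv (fun b => ρ ^ β * Real.cos (θ/2) * Real.cos b) a)
      = fun a => (ρ / (R - ρ * Real.cos θ)) * (ρ ^ β * Real.cos (θ/2) * -Real.sin a) :=
    funext fun a => by rw [hinner a]
  rw [hfun]
  exact (((Real.hasDerivAt_sin φ).neg.const_mul (ρ ^ β * Real.cos (θ/2))).const_mul
    (ρ / (R - ρ * Real.cos θ))).deriv



/-- Subharmonicity of `W_β = ρ^β cos(θ/2) cos φ` in toroidal coordinates near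
the circle, for `β > 1/2`, on the region `|φ| < π/2`. -/
theorem stmt16 (R β : ℝ) (hR : 0 < R) (hβ : 1/2 < β) :
    ∃ δ > (0:ℝ), ∃ C > (0:ℝ),
      ∀ ρ θ φ : ℝ, 0 < ρ → ρ < δ → -Real.pi < θ → θ < Real.pi →
        -(Real.pi/2) < φ → φ < Real.pi/2 →
        (0 ≤ (1 / (ρ * (R - ρ * Real.cos θ))) *
          ( deriv (fun a => a * (R - a * Real.cos θ)
                * deriv (fun b => b ^ β * Real.cos (θ/2) * Real.cos φ) a) ρ
          + deriv (fun a => ((R - ρ * Real.cos a) / ρ)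
                * deriv (fun b => ρ ^ β * Real.cos (b/2) * Real.cos φ) a) θ
          + deriv (fun a => (ρ / (R - ρ * Real.cos θ))
                * deriv (fun b => ρ ^ β * Real.cos (θ/2) * Real.cos b) a) φ )) ∧
        ∃ err : ℝ, |err| ≤ C * ρ ^ β ∧
          (1 / (ρ * (R - ρ * Real.cos θ))) *
            ( deriv (fun a => a * (R - a * Real.cos θ)
                  * deriv (fun b => b ^ β * Real.cos (θ/2) * Real.cos φ) a) ρ
            + deriv (fun a => ((R - ρ * Real.cos a) / ρ)
                  * deriv (fun b => ρ ^ β * Real.cos (b/2) * Real.cos φ) a) θ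
            + deriv (fun a => (ρ / (R - ρ * Real.cos θ))
                  * deriv (fun b => ρ ^ β * Real.cos (θ/2) * Real.cos b) a) φ )
          = (1 / (ρ * (R - ρ * Real.cos θ))) *
              (((β^2 - 1/4) * R * ρ ^ (β - 1) + err)
                  * Real.cos (θ/2) * Real.cos φ
                - (ρ ^ (β + 1) / (R - ρ * Real.cos θ))
                  * Real.cos (θ/2) * Real.cos φ) := by
  have hC0 : (0:ℝ) < β * (β + 1) + 2 := by nlinarith
  have hβ2 : (0:ℝ) < β^2 - 1/4 := by nlinarith
  refine ⟨min (R/2) ((β^2 - 1/4) * R / (β * (β + 1) + 3)),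
    lt_min (by linarith) (div_pos (mul_pos hβ2 hR) (by nlinarith)),
    β * (β + 1) + 2, hC0, fun ρ θ φ hρ hρδ hθ1 hθ2 hφ1 hφ2 => ?_⟩
  have hρR : ρ < R/2 := lt_of_lt_of_le hρδ (min_le_left _ _)
  have hρX : ρ < (β^2 - 1/4) * R / (β * (β + 1) + 3) :=
    lt_of_lt_of_le hρδ (min_le_right _ _)
  have hcos1 : Real.cos θ ≤ 1 := Real.cos_le_one θ
  have hcosm : -1 ≤ Real.cos θ := Real.neg_one_le_cos θ
  have hD : 0 < R - ρ * Real.cos θ := by nlinarith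
  have hDhalf : R/2 ≤ R - ρ * Real.cos θ := by nlinarith
  have hu : 0 < Real.cos (θ/2) := by
    apply Real.cos_pos_of_mem_Ioo
    constructor <;> [linarith; linarith]
  have hv : 0 < Real.cos φ := by
    apply Real.cos_pos_of_mem_Ioo
    constructor <;> [linarith; linarith]
  have hQ : 0 < ρ ^ (β - 1 - 1) := Real.rpow_pos_of_pos hρ _
  have hP : 0 < ρ ^ (β - 1) := Real.rpow_pos_of_pos hρ _
  have hPβ : 0 < ρ ^ β := Real.rpow_pos_of_pos hρ _
  have e1 : ρ ^ (β - 1 - 1) * ρ = ρ ^ (β - 1) := by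
    rw [← Real.rpow_add_one hρ.ne']; congr 1; ring
  have e2 : ρ ^ (β - 1 - 1) * ρ * ρ = ρ ^ β := by
    rw [e1, ← Real.rpow_add_one hρ.ne']; congr 1; ring
  have e3 : ρ ^ (β - 1 - 1) * ρ * ρ * ρ = ρ ^ (β + 1) := by
    rw [e2, ← Real.rpow_add_one hρ.ne']
  have hs : Real.sin θ = 2 * Real.sin (θ/2) * Real.cos (θ/2) := by
    have h := Real.sin_two_mul (θ/2)
    rw [show 2 * (θ/2) = θ by ring] at h
    linarith
  set err : ℝ := ρ ^ β * ((1/4 - β * (β + 1)) * Real.cos θ - Real.sin (θ/2)^2) with herr_def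
  have hbnd : |err| ≤ (β * (β + 1) + 2) * ρ ^ β := by
    rw [herr_def, abs_mul, abs_of_pos hPβ, mul_comm ((β * (β + 1) + 2)) (ρ ^ β)]
    apply mul_le_mul_of_nonneg_left _ hPβ.le
    rw [abs_le]
    constructor <;>
      nlinarith [Real.sin_sq_le_one (θ/2), sq_nonneg (Real.sin (θ/2))]
  have heq : (1 / (ρ * (R - ρ * Real.cos θ))) *
            ( deriv (fun a => a * (R - a * Real.cos θ)
                  * deriv (fun b => b ^ β * Real.cos (θ/2) * Real.cos φ) a) ρ
            + deriv (fun a => ((R - ρ * Real.cos a) / ρ)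
                  * deriv (fun b => ρ ^ β * Real.cos (b/2) * Real.cos φ) a) θ
            + deriv (fun a => (ρ / (R - ρ * Real.cos θ))
                  * deriv (fun b => ρ ^ β * Real.cos (θ/2) * Real.cos b) a) φ )
          = (1 / (ρ * (R - ρ * Real.cos θ))) *
              (((β^2 - 1/4) * R * ρ ^ (β - 1) + err)
                  * Real.cos (θ/2) * Real.cos φ
                - (ρ ^ (β + 1) / (R - ρ * Real.cos θ))
                  * Real.cos (θ/2) * Real.cos φ) := by
    rw [derT1 R β θ φ hρ, derT2 R β ρ φ θ, derT3 R β ρ θ φ, herr_def, hs,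
      ← e3, ← e2, ← e1]
    field_simp
    ring
  refine ⟨?_, err, hbnd, heq⟩
  rw [heq]
  have hfac : 0 ≤ 1 / (ρ * (R - ρ * Real.cos θ)) :=
    le_of_lt (one_div_pos.mpr (mul_pos hρ hD))
  apply mul_nonneg hfac
  -- key inequality
  have hCρ : (β * (β + 1) + 3) * ρ ≤ (β^2 - 1/4) * R := by
    have := (lt_div_iff₀ (by nlinarith : (0:ℝ) < β * (β + 1) + 3)).1 hρX
    nlinarith
  have hkey : ρ ^ (β + 1) / (R - ρ * Real.cos θ)
      ≤ (β^2 - 1/4) * R * ρ ^ (β - 1) + err := by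
    have hB1 : ρ ^ (β + 1) / (R - ρ * Real.cos θ) ≤ ρ ^ (β + 1) / (R/2) := by
      apply div_le_div_of_nonneg_left (Real.rpow_pos_of_pos hρ _).le (by linarith) hDhalf
    refine le_trans hB1 ?_
    rw [div_le_iff₀ (by linarith : (0:ℝ) < R/2), ← e3, ← e1]
    have herrlb : -( (β * (β + 1) + 2) * (ρ ^ (β-1-1) * ρ * ρ)) ≤ err := by
      have h := (abs_le.1 hbnd).1
      rw [e2]; linarith
    nlinarith [mul_pos hQ hρ, mul_pos (mul_pos hQ hρ) hρ,
      mul_le_mul_of_nonneg_left hCρ (mul_pos hQ hρ).le,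
      mul_le_mul_of_nonneg_left hDhalf (mul_pos (mul_pos hQ hρ) hρ).le,
      mul_nonneg (mul_nonneg hQ.le hρ.le) hρ.le]
  nlinarith [mul_le_mul_of_nonneg_right hkey (mul_pos hu hv).le, mul_pos hu hv]
end
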